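/- For every m ≥ 1 there exist nonnegative integers n and t such that s_2(n + ℓ·t) − s_2(n + (ℓ−1)·t) = 0 for all ℓ with 1 ≤ ℓ < m, and s_2(n + m·t) − s_2(n + (m−1)·t) = −1 (differences taken in ℤ). -/

import Mathlib

/-- The binary sum-of-digits function. -/
def s2 (n : ℕ) : ℕ := (Nat.digits 2 n).sum

lemma s2_rec (n : ℕ) : s2 n = n % 2 + s2 (n / 2) := by
  rcases Nat.eq_zero_or_pos n with h | h
  · simp [h, s2]
  · unfold s2
    rw [Nat.digits_def' (by norm_num : 1 < 2) h]
    simp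

lemma s2_split (k : ℕ) : ∀ q r : ℕ, r < 2 ^ k → s2 (q * 2 ^ k + r) = s2 q + s2 r := by
  induction k with
  | zero =>
      intro q r hr
      interval_cases r
      simp [s2]
  | succ k ih =>
      intro q r hr
      have h2 : (2:ℕ) ^ (k+1) = 2 * 2 ^ k := by ring
      have e : q * 2 ^ (k+1) = 2 * (q * 2 ^ k) := by ring
      rw [s2_rec (q * 2 ^ (k+1) + r), e]
      have hq2 : (2 * (q * 2 ^ k) + r) / 2 = q * 2 ^ k + r / 2 := by omega
      have hm2 : (2 * (q * 2 ^ k) + r) % 2 = r % 2 := by omega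
      rw [hq2, hm2, ih q (r / 2) (by omega), s2_rec r]
      omega

lemma s2_compl (k : ℕ) : ∀ x : ℕ, x < 2 ^ k → s2 (2 ^ k - 1 - x) + s2 x = k := by
  induction k with
  | zero =>
      intro x hx
      interval_cases x
      simp [s2]
  | succ k ih =>
      intro x hx
      have h2 : (2:ℕ) ^ (k+1) = 2 * 2 ^ k := by ring
      have hpos : 0 < 2 ^ k := Nat.pow_pos (by norm_num)
      have hq : (2 ^ (k+1) - 1 - x) / 2 = 2 ^ k - 1 - x / 2 := by omega
      have hm : (2 ^ (k+1) - 1 - x) % 2 + x % 2 = 1 := by omega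
      have := ih (x / 2) (by omega)
      rw [s2_rec (2 ^ (k+1) - 1 - x), s2_rec x, hq]
      omega

lemma s2_one : s2 1 = 1 := by simp [s2]

lemma s2_zero : s2 0 = 0 := by simp [s2]

lemma s2_key (K m : ℕ) (hm : 1 ≤ m) (hmH : m ≤ 2 ^ K) (j : ℕ) (hj : j ≤ m) :
    s2 ((2 ^ (K+1) - m) * 2 ^ (K+1) + 2 ^ K + (m - 1) + j * (2 ^ (K+1) - 1))
      = if j = m then K + 1 else K + 2 := by
  have hPH : (2:ℕ) ^ (K+1) = 2 * 2 ^ K := by ring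
  have hHpos : 0 < 2 ^ K := Nat.pow_pos (by norm_num)
  obtain ⟨A, hA⟩ : ∃ A, 2 ^ (K+1) = A + m := ⟨2 ^ (K+1) - m, by omega⟩
  rw [show 2 ^ (K+1) - m = A from by omega]
  rcases Nat.lt_or_ge j m with hjm | hjm
  · -- j < m : value is K + 2
    have h1 : j * (2 ^ (K+1) - 1) = j * 2 ^ (K+1) - j := by
      rw [Nat.mul_sub, mul_one]
    have h2 : (A + j) * 2 ^ (K+1) = A * 2 ^ (K+1) + j * 2 ^ (K+1) := add_mul _ _ _
    have h3 : j ≤ j * 2 ^ (K+1) := Nat.le_mul_of_pos_right _ (by positivity)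
    have e1 : A * 2 ^ (K+1) + 2 ^ K + (m - 1) + j * (2 ^ (K+1) - 1)
        = (A + j) * 2 ^ (K+1) + (1 * 2 ^ K + (m - 1 - j)) := by
      rw [one_mul]; omega
    rw [e1, s2_split (K+1) (A + j) _ (by omega),
        s2_split K 1 (m - 1 - j) (by omega), s2_one,
        show A + j = 2 ^ (K+1) - 1 - (m - 1 - j) from by omega]
    have hc := s2_compl (K+1) (m - 1 - j) (by omega)
    rw [if_neg (by omega : ¬ j = m)]
    omega
  · -- j = m : value is K + 1
    have hjm' : j = m := by omega
    subst hjm'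
    have h1 : j * (2 ^ (K+1) - 1) = j * 2 ^ (K+1) - j := by
      rw [Nat.mul_sub, mul_one]
    have h2 : 2 ^ (K+1) * 2 ^ (K+1) = A * 2 ^ (K+1) + j * 2 ^ (K+1) := by
      rw [hA]; ring
    have h3 : j ≤ j * 2 ^ (K+1) := Nat.le_mul_of_pos_right _ (by positivity)
    have e1 : A * 2 ^ (K+1) + 2 ^ K + (j - 1) + j * (2 ^ (K+1) - 1)
        = 2 ^ (K+1) * 2 ^ (K+1) + (2 ^ K - 1) := by omega
    rw [e1, s2_split (K+1) (2 ^ (K+1)) _ (by omega),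
        show (2:ℕ) ^ (K+1) = 1 * 2 ^ (K+1) + 0 from by ring,
        s2_split (K+1) 1 0 (by positivity), s2_one, s2_zero]
    have hc : s2 (2 ^ K - 1) = K := by
      have := s2_compl K 0 (by omega)
      simpa [s2_zero] using this
    rw [hc, if_pos rfl]
    omega

theorem stmt_18 (m : ℕ) (hm : 1 ≤ m) :
    ∃ n t : ℕ,
      (∀ ℓ : ℕ, 1 ≤ ℓ → ℓ < m →
        (s2 (n + ℓ * t) : ℤ) - (s2 (n + (ℓ - 1) * t) : ℤ) = 0) ∧
      (s2 (n + m * t) : ℤ) - (s2 (n + (m - 1) * t) : ℤ) = -1 := by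
  obtain ⟨K, hmK⟩ : ∃ K, m = K + 1 := ⟨m - 1, by omega⟩
  have hmH : m ≤ 2 ^ K := by
    have := @Nat.lt_two_pow_self K
    omega
  refine ⟨(2 ^ (K+1) - m) * 2 ^ (K+1) + 2 ^ K + (m - 1), 2 ^ (K+1) - 1, ?_, ?_⟩
  · intro ℓ h1 h2
    rw [s2_key K m hm hmH ℓ (by omega), s2_key K m hm hmH (ℓ - 1) (by omega),
        if_neg (by omega : ¬ ℓ = m), if_neg (by omega : ¬ ℓ - 1 = m)]
    ring
  · rw [s2_key K m hm hmH m le_rfl, s2_key K m hm hmH (m - 1) (by omega),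
        if_pos rfl, if_neg (by omega : ¬ m - 1 = m)]
    push_cast
    ring
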